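/- arXiv:2604.24505 — 2 statements merged into one kernel-verified Lean document; each statement's English description precedes it below -/
import Mathlib

section
/- Let f : [0,1] → ℝ be bounded with finite p-variation V_p(f) for some p ≥ 1. Then for every x > 0, |∫₀¹ f(t) e^{-2πi x t} dt| ≤ V_p(f) · x^{-1/p} + ‖f‖_∞ / x. -/
open Set MeasureTheory Filter

noncomputable section

/-- The set of values `(∑ |f(x_k)-f(x_{k-1})|^p)^{1/p}` over all partitions
`0 = x_0 < x_1 < ⋯ < x_n = 1` of `[0,1]`. -/
def pVarSums {E : Type*} [NormedAddCommGroup E] (p : ℝ) (f : ℝ → E) : Set ℝ :=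
  {S | ∃ n : ℕ, ∃ x : ℕ → ℝ, x 0 = 0 ∧ x n = 1 ∧ (∀ i, i < n → x i < x (i + 1)) ∧
    S = (∑ k ∈ Finset.range n, ‖f (x (k + 1)) - f (x k)‖ ^ p) ^ (1 / p)}

/-- The `p`-variation of `f` on `[0,1]`. -/
def pVar {E : Type*} [NormedAddCommGroup E] (p : ℝ) (f : ℝ → E) : ℝ :=
  sSup (pVarSums p f)

/-- `f` has finite `p`-variation on `[0,1]`. -/
def HasFinitePVar {E : Type*} [NormedAddCommGroup E] (p : ℝ) (f : ℝ → E) : Prop :=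
  BddAbove (pVarSums p f)

/-- The sup norm of `f` on `[0,1]`. -/
def supNorm01 {E : Type*} [NormedAddCommGroup E] (f : ℝ → E) : ℝ :=
  sSup ((fun t => ‖f t‖) '' Icc (0 : ℝ) 1)

/-!
Cut `[0,1]` at the points `k/x`, `k ≤ ⌊x⌋`. On a full period `[k/x, (k+1)/x]` the exponential
integrates to zero, so `f` may be replaced there by `f - f(k/x)`, and the period contributes at
most `x⁻¹ · sup |f - f(k/x)|`. Interleaving the points `k/x` with near-maximisers of these
suprema gives a partition of `[0,1]`, so the `p`-th powers of the suprema sum to at most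
`V_p(f)^p`; Hölder's inequality over the `⌊x⌋ ≤ x` periods then bounds their total contribution
by `x^{1-1/p} V_p(f) / x`. The remaining piece `[⌊x⌋/x, 1]` is shorter than `1/x` and contributes
at most `‖f‖_∞ / x`.
-/

lemma Finset.sum_csSup_le {ι : Type*} {s : Finset ι} {A : ι → Set ℝ} {C : ℝ}
    (hA : ∀ i ∈ s, (A i).Nonempty) (h : ∀ g : ι → ℝ, (∀ i ∈ s, g i ∈ A i) → ∑ i ∈ s, g i ≤ C) :
    ∑ i ∈ s, sSup (A i) ≤ C := by
  refine le_of_forall_pos_lt_add fun ε hε => ?_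
  set δ := ε / (s.card + 1)
  have hδ0 : 0 < δ := by positivity
  have hδ : s.card * δ < ε := by
    rw [← mul_div_assoc, div_lt_iff₀ (by positivity)]
    linarith
  have hnear : ∀ i ∈ s, ∃ a ∈ A i, sSup (A i) - δ < a := fun i hi =>
    exists_lt_of_lt_csSup (hA i hi) (by linarith)
  choose! g hgA hg using hnear
  calc ∑ i ∈ s, sSup (A i) = ∑ i ∈ s, (sSup (A i) - δ) + s.card * δ := by
        rw [Finset.sum_sub_distrib, Finset.sum_const, nsmul_eq_mul]; ring
    _ ≤ ∑ i ∈ s, g i + s.card * δ := by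
        gcongr with i hi; exact (hg i hi).le
    _ < C + ε := by linarith [h g hgA]

lemma Finset.sum_range_two_mul_le {g : ℕ → ℝ} (hg : ∀ j, 0 ≤ g j) (n : ℕ) :
    ∑ k ∈ Finset.range n, g (2 * k) ≤ ∑ j ∈ Finset.range (2 * n), g j := by
  induction n with
  | zero => simp
  | succ n ih =>
    rw [Finset.sum_range_succ, Nat.mul_succ, Finset.sum_range_succ, Finset.sum_range_succ]
    linarith [hg (2 * n + 1)]

lemma Finset.sum_rpow_inv_le_card_rpow_mul {ι : Type*} (s : Finset ι) {p : ℝ} (hp : 1 ≤ p)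
    {d : ι → ℝ} (hd : ∀ i, 0 ≤ d i) {V : ℝ} (hV : 0 ≤ V) (hsum : ∑ i ∈ s, d i ≤ V ^ p) :
    ∑ i ∈ s, d i ^ p⁻¹ ≤ (s.card : ℝ) ^ (1 - p⁻¹) * V := by
  have hp0 : p ≠ 0 := by positivity
  have holder := Real.inner_le_weight_mul_Lp_of_nonneg s hp (fun _ => 1) (fun i => d i ^ p⁻¹)
    (fun _ => zero_le_one) (fun i => Real.rpow_nonneg (hd i) _)
  simp only [one_mul, Finset.sum_const, nsmul_eq_mul, mul_one] at holder
  simp_rw [Real.rpow_inv_rpow (hd _) hp0] at holder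
  refine holder.trans (mul_le_mul_of_nonneg_left ?_ (by positivity))
  calc (∑ i ∈ s, d i) ^ p⁻¹ ≤ (V ^ p) ^ p⁻¹ :=
        Real.rpow_le_rpow (Finset.sum_nonneg fun i _ => hd i) hsum (by positivity)
    _ = V := Real.rpow_rpow_inv hV hp0

lemma rpow_one_sub_inv_div_le {p n x : ℝ} (hp : 1 ≤ p) (hx : 0 < x) (hn : 0 ≤ n)
    (hnx : n ≤ x) : n ^ (1 - p⁻¹) / x ≤ x ^ (-(1 / p)) := by
  have hexp : 0 ≤ 1 - p⁻¹ := sub_nonneg.2 (inv_le_one_of_one_le₀ hp)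
  calc n ^ (1 - p⁻¹) / x ≤ x ^ (1 - p⁻¹) / x := by gcongr
    _ = x ^ (1 - p⁻¹ - 1) := (Real.rpow_sub_one hx.ne' _).symm
    _ = x ^ (-(1 / p)) := by ring_nf

lemma strictMono_natCast_div {x : ℝ} (hx : 0 < x) : StrictMono fun k : ℕ => (k : ℝ) / x :=
  fun _ _ h => div_lt_div_of_pos_right (Nat.cast_lt.2 h) hx

lemma natFloor_div_le_one {x : ℝ} (hx : 0 < x) : (⌊x⌋₊ : ℝ) / x ≤ 1 :=
  (div_le_one hx).2 (Nat.floor_le hx.le)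

lemma intervalIntegral.integral_zero_one_eq_sum_add {E : Type*} [NormedAddCommGroup E]
    [NormedSpace ℝ E] {F : ℝ → E} (hF : IntervalIntegrable F volume 0 1) {a : ℕ → ℝ}
    (ha : Monotone a) (ha0 : a 0 = 0) {N : ℕ} (haN : a N ≤ 1) :
    ∫ t in (0 : ℝ)..1, F t
      = (∑ k ∈ Finset.range N, ∫ t in a k..a (k + 1), F t) + ∫ t in a N..1, F t := by
  have hmem : ∀ k ≤ N, a k ∈ uIcc (0 : ℝ) 1 := fun k hk => by
    rw [uIcc_of_le zero_le_one]
    exact ⟨ha0 ▸ ha (Nat.zero_le k), (ha hk).trans haN⟩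
  have hint : ∀ {u v : ℝ}, u ∈ uIcc (0 : ℝ) 1 → v ∈ uIcc (0 : ℝ) 1 →
      IntervalIntegrable F volume u v := fun hu hv => hF.mono_set (uIcc_subset_uIcc hu hv)
  rw [intervalIntegral.sum_integral_adjacent_intervals (μ := volume)
      fun k hk => hint (hmem k hk.le) (hmem (k + 1) hk), ha0,
    intervalIntegral.integral_add_adjacent_intervals (hint left_mem_uIcc (hmem N le_rfl))
      (hint (hmem N le_rfl) right_mem_uIcc)]

def pOsc {E : Type*} [NormedAddCommGroup E] (p : ℝ) (f : ℝ → E) (a b : ℝ) : ℝ :=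
  sSup ((fun t => ‖f t - f a‖ ^ p) '' Ioo a b)

section UnitInterval

variable {E : Type*} [NormedAddCommGroup E] {p : ℝ} {f : ℝ → E}

lemma pVar_nonneg (hfv : HasFinitePVar p f) : 0 ≤ pVar p f := by
  have hmem : (‖f 1 - f 0‖ ^ p) ^ (1 / p) ∈ pVarSums p f :=
    ⟨1, fun i => i, by simp, by simp, by simp, by simp⟩
  exact (Real.rpow_nonneg (by positivity) _).trans (le_csSup hfv hmem)

lemma sum_norm_sub_rpow_le_pVar_rpow (hp : 0 < p) (hfv : HasFinitePVar p f) {m : ℕ}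
    {z : ℕ → ℝ} (h0 : z 0 = 0) (hm : z m = 1) (hz : ∀ i < m, z i < z (i + 1)) :
    ∑ j ∈ Finset.range m, ‖f (z (j + 1)) - f (z j)‖ ^ p ≤ pVar p f ^ p := by
  have hsum : 0 ≤ ∑ j ∈ Finset.range m, ‖f (z (j + 1)) - f (z j)‖ ^ p := by positivity
  calc ∑ j ∈ Finset.range m, ‖f (z (j + 1)) - f (z j)‖ ^ p
      = ((∑ j ∈ Finset.range m, ‖f (z (j + 1)) - f (z j)‖ ^ p) ^ (1 / p)) ^ p := by
        rw [← Real.rpow_mul hsum, one_div_mul_cancel hp.ne', Real.rpow_one]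
    _ ≤ pVar p f ^ p :=
        Real.rpow_le_rpow (by positivity) (le_csSup hfv ⟨m, z, h0, hm, hz, rfl⟩) hp.le

lemma sum_norm_sub_rpow_le_pVar_rpow_of_interlace (hp : 0 < p) (hfv : HasFinitePVar p f)
    {N : ℕ} {a t : ℕ → ℝ} (ha0 : a 0 = 0) (hat : ∀ k < N, a k < t k ∧ t k < a (k + 1))
    (haN : a N ≤ 1) :
    ∑ k ∈ Finset.range N, ‖f (t k) - f (a k)‖ ^ p ≤ pVar p f ^ p := by
  rcases Nat.eq_zero_or_pos N with rfl | hN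
  · simpa using Real.rpow_nonneg (pVar_nonneg hfv) p
  set z : ℕ → ℝ := fun j => if j = 2 * N then 1 else if j % 2 = 0 then a (j / 2) else t (j / 2)
  have hz_even : ∀ k < N, z (2 * k) = a k := fun k hk => by
    simp only [z, if_neg (by omega : 2 * k ≠ 2 * N), Nat.mul_mod_right,
      Nat.mul_div_cancel_left k two_pos, if_true]
  have hz_odd : ∀ k < N, z (2 * k + 1) = t k := fun k hk => by
    simp only [z, if_neg (by omega : 2 * k + 1 ≠ 2 * N), if_neg (by omega : (2 * k + 1) % 2 ≠ 0),
      (by omega : (2 * k + 1) / 2 = k)]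
  have hz : ∀ j < 2 * N, z j < z (j + 1) := by
    intro j hj
    obtain ⟨k, rfl | rfl⟩ := Nat.even_or_odd' j
    · rw [hz_even k (by omega), hz_odd k (by omega)]
      exact (hat k (by omega)).1
    · rw [hz_odd k (by omega)]
      by_cases hk : k + 1 = N
      · rw [show 2 * k + 1 + 1 = 2 * N by omega]
        simp only [z, if_true]
        exact (hk ▸ (hat k (by omega)).2).trans_le haN
      · rw [show 2 * k + 1 + 1 = 2 * (k + 1) by omega, hz_even (k + 1) (by omega)]
        exact (hat k (by omega)).2
  calc ∑ k ∈ Finset.range N, ‖f (t k) - f (a k)‖ ^ p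
      = ∑ k ∈ Finset.range N, ‖f (z (2 * k + 1)) - f (z (2 * k))‖ ^ p :=
        Finset.sum_congr rfl fun k hk => by
          rw [hz_odd k (Finset.mem_range.1 hk), hz_even k (Finset.mem_range.1 hk)]
    _ ≤ ∑ j ∈ Finset.range (2 * N), ‖f (z (j + 1)) - f (z j)‖ ^ p :=
        Finset.sum_range_two_mul_le (g := fun j => ‖f (z (j + 1)) - f (z j)‖ ^ p)
          (fun j => by positivity) N
    _ ≤ pVar p f ^ p :=
        sum_norm_sub_rpow_le_pVar_rpow hp hfv ((hz_even 0 hN).trans ha0) (by simp [z]) hz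

lemma pOsc_nonneg {a b : ℝ} : 0 ≤ pOsc p f a b :=
  Real.sSup_nonneg <| by rintro _ ⟨t, -, rfl⟩; positivity

lemma sum_pOsc_le_pVar_rpow (hp : 0 < p) (hfv : HasFinitePVar p f) {N : ℕ} {a : ℕ → ℝ}
    (ha0 : a 0 = 0) (ha : StrictMono a) (haN : a N ≤ 1) :
    ∑ k ∈ Finset.range N, pOsc p f (a k) (a (k + 1)) ≤ pVar p f ^ p := by
  refine Finset.sum_csSup_le (fun k _ => (nonempty_Ioo.2 (ha k.lt_succ_self)).image _) ?_
  intro g hg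
  choose! t ht hgt using hg
  calc ∑ k ∈ Finset.range N, g k = ∑ k ∈ Finset.range N, ‖f (t k) - f (a k)‖ ^ p :=
        Finset.sum_congr rfl fun k hk => (hgt k hk).symm
    _ ≤ pVar p f ^ p := sum_norm_sub_rpow_le_pVar_rpow_of_interlace hp hfv ha0
        (fun k hk => ht k (Finset.mem_range.2 hk)) haN

lemma norm_sub_le_pOsc_rpow_inv (hp : 0 < p) {a b t : ℝ}
    (hbdd : BddAbove ((fun t => ‖f t - f a‖ ^ p) '' Ioo a b)) (ht : t ∈ Ioo a b) :
    ‖f t - f a‖ ≤ pOsc p f a b ^ p⁻¹ := by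
  have hle : ‖f t - f a‖ ^ p ≤ pOsc p f a b := le_csSup hbdd ⟨t, ht, rfl⟩
  exact (Real.le_rpow_inv_iff_of_pos (norm_nonneg _) pOsc_nonneg hp).2 hle

lemma norm_le_supNorm01 (hbdd : BddAbove ((fun t => ‖f t‖) '' Icc (0 : ℝ) 1)) {t : ℝ}
    (ht : t ∈ Icc (0 : ℝ) 1) : ‖f t‖ ≤ supNorm01 f :=
  le_csSup hbdd ⟨t, ht, rfl⟩

lemma supNorm01_nonneg (hbdd : BddAbove ((fun t => ‖f t‖) '' Icc (0 : ℝ) 1)) :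
    0 ≤ supNorm01 f :=
  (norm_nonneg _).trans (norm_le_supNorm01 hbdd (left_mem_Icc.2 zero_le_one))

lemma bddAbove_image_norm_sub_rpow (hbdd : BddAbove ((fun t => ‖f t‖) '' Icc (0 : ℝ) 1))
    (hp : 0 ≤ p) {s : Set ℝ} (hs : s ⊆ Icc 0 1) {a : ℝ} (ha : a ∈ Icc (0 : ℝ) 1) :
    BddAbove ((fun t => ‖f t - f a‖ ^ p) '' s) := by
  refine ⟨(supNorm01 f + supNorm01 f) ^ p, ?_⟩
  rintro _ ⟨t, ht, rfl⟩
  refine Real.rpow_le_rpow (norm_nonneg _) ((norm_sub_le _ _).trans ?_) hp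
  exact add_le_add (norm_le_supNorm01 hbdd (hs ht)) (norm_le_supNorm01 hbdd ha)

end UnitInterval

/-- `e(x t)` in the notation `e(t) = e^{-2πit}`. -/
def fourierKernel (x t : ℝ) : ℂ :=
  Complex.exp (-2 * (Real.pi : ℂ) * Complex.I * (x : ℂ) * (t : ℂ))

lemma norm_fourierKernel (x t : ℝ) : ‖fourierKernel x t‖ = 1 := by
  simp [fourierKernel, Complex.norm_exp]

lemma continuous_fourierKernel (x : ℝ) : Continuous (fourierKernel x) := by
  unfold fourierKernel; fun_prop

lemma integral_fourierKernel_period {x : ℝ} (hx : x ≠ 0) (a : ℝ) :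
    ∫ t in a..a + x⁻¹, fourierKernel x t = 0 := by
  have hc : -2 * (Real.pi : ℂ) * Complex.I * x ≠ 0 := by simp [hx, Real.pi_ne_zero]
  have hperiod : -2 * (Real.pi : ℂ) * Complex.I * x * ((a + x⁻¹ : ℝ) : ℂ)
      = -2 * (Real.pi : ℂ) * Complex.I * x * a + -(2 * Real.pi * Complex.I) := by
    have hxC : (x : ℂ) ≠ 0 := Complex.ofReal_ne_zero.2 hx
    push_cast; field_simp; ring
  simp only [fourierKernel]
  rw [integral_exp_mul_complex hc, hperiod, Complex.exp_add, Complex.exp_neg,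
    Complex.exp_two_pi_mul_I, inv_one, mul_one, sub_self, zero_div]

/-- Only the deviation of `g` from a constant matters: `e(x ·)` integrates to zero over a period. -/
lemma norm_integral_mul_fourierKernel_period_le {x : ℝ} (hx : 0 < x) {a : ℝ} {g : ℝ → ℂ}
    (hg : IntervalIntegrable (fun t => g t * fourierKernel x t) volume a (a + x⁻¹))
    (c : ℂ) {C : ℝ} (hC : ∀ t ∈ Ioo a (a + x⁻¹), ‖g t - c‖ ≤ C) :
    ‖∫ t in a..a + x⁻¹, g t * fourierKernel x t‖ ≤ C / x := by
  have hconst : IntervalIntegrable (fun t => c * fourierKernel x t) volume a (a + x⁻¹) :=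
    ((continuous_fourierKernel x).const_mul c).intervalIntegrable _ _
  have hsub : ∫ t in a..a + x⁻¹, g t * fourierKernel x t
      = ∫ t in a..a + x⁻¹, (g t - c) * fourierKernel x t := by
    simp_rw [sub_mul]
    rw [intervalIntegral.integral_sub hg hconst, intervalIntegral.integral_const_mul,
      integral_fourierKernel_period hx.ne', mul_zero, sub_zero]
  have hbound : ∀ᵐ t, t ∈ uIoc a (a + x⁻¹) → ‖(g t - c) * fourierKernel x t‖ ≤ C := by
    filter_upwards [(countable_singleton (a + x⁻¹)).ae_notMem volume] with t hne ht
    rw [uIoc_of_le (by simp [hx.le])] at ht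
    rw [norm_mul, norm_fourierKernel, mul_one]
    exact hC t ⟨ht.1, lt_of_le_of_ne ht.2 hne⟩
  calc ‖∫ t in a..a + x⁻¹, g t * fourierKernel x t‖ ≤ C * |a + x⁻¹ - a| := by
        rw [hsub]; exact intervalIntegral.norm_integral_le_of_norm_le_const_ae hbound
    _ = C / x := by rw [add_sub_cancel_left, abs_of_pos (inv_pos.2 hx), div_eq_mul_inv]

section FourierIntegral

variable {p : ℝ} {f : ℝ → ℝ} {x : ℝ}

lemma sum_norm_integral_periods_le (hp : 1 ≤ p) (hfv : HasFinitePVar p f)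
    (hbdd : BddAbove ((fun t => ‖f t‖) '' Icc (0 : ℝ) 1)) (hx : 0 < x)
    (hint : IntervalIntegrable (fun t => (f t : ℂ) * fourierKernel x t) volume 0 1) :
    ∑ k ∈ Finset.range ⌊x⌋₊,
        ‖∫ t in (k : ℝ) / x..((k + 1 : ℕ) : ℝ) / x, (f t : ℂ) * fourierKernel x t‖
      ≤ pVar p f * x ^ (-(1 / p)) := by
  have hp0 : 0 < p := by positivity
  set N := ⌊x⌋₊
  set a : ℕ → ℝ := fun k => k / x
  have ha := strictMono_natCast_div hx
  have haN : a N ≤ 1 := natFloor_div_le_one hx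
  have ha_mem : ∀ k ≤ N, a k ∈ Icc (0 : ℝ) 1 := fun k hk =>
    ⟨by positivity, (ha.monotone hk).trans haN⟩
  have hstep : ∀ k, a (k + 1) = a k + x⁻¹ := fun k => by simp only [a]; push_cast; ring
  have hpiece : ∀ k < N, ‖∫ t in a k..a (k + 1), (f t : ℂ) * fourierKernel x t‖
      ≤ pOsc p f (a k) (a (k + 1)) ^ p⁻¹ / x := by
    intro k hk
    have hsub : Icc (a k) (a (k + 1)) ⊆ Icc 0 1 :=
      Icc_subset_Icc (ha_mem k hk.le).1 (ha_mem (k + 1) hk).2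
    have hbddk := bddAbove_image_norm_sub_rpow hbdd hp0.le (Ioo_subset_Icc_self.trans hsub)
      (ha_mem k hk.le)
    rw [hstep] at hsub hbddk ⊢
    refine norm_integral_mul_fourierKernel_period_le hx (hint.mono_set ?_) (f (a k)) fun t ht => ?_
    · rwa [uIcc_of_le zero_le_one, uIcc_of_le (by simp [hx.le])]
    · rw [← Complex.ofReal_sub, Complex.norm_real]
      exact norm_sub_le_pOsc_rpow_inv hp0 hbddk ht
  have hosc := sum_pOsc_le_pVar_rpow hp0 hfv (f := f) (by simp) ha haN
  calc ∑ k ∈ Finset.range N, ‖∫ t in a k..a (k + 1), (f t : ℂ) * fourierKernel x t‖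
      ≤ ∑ k ∈ Finset.range N, pOsc p f (a k) (a (k + 1)) ^ p⁻¹ / x :=
        Finset.sum_le_sum fun k hk => hpiece k (Finset.mem_range.1 hk)
    _ ≤ (N : ℝ) ^ (1 - p⁻¹) * pVar p f / x := by
        rw [← Finset.sum_div]
        gcongr
        have := Finset.sum_rpow_inv_le_card_rpow_mul _ hp (fun k => pOsc_nonneg)
          (pVar_nonneg hfv) hosc
        rwa [Finset.card_range] at this
    _ ≤ pVar p f * x ^ (-(1 / p)) := by
        rw [mul_comm, mul_div_assoc]
        exact mul_le_mul_of_nonneg_left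
          (rpow_one_sub_inv_div_le hp hx (Nat.cast_nonneg N) (Nat.floor_le hx.le)) (pVar_nonneg hfv)

lemma norm_integral_remainder_le (hbdd : BddAbove ((fun t => ‖f t‖) '' Icc (0 : ℝ) 1))
    (hx : 0 < x) :
    ‖∫ t in (⌊x⌋₊ : ℝ) / x..1, (f t : ℂ) * fourierKernel x t‖ ≤ supNorm01 f / x := by
  have hN : (⌊x⌋₊ : ℝ) / x ≤ 1 := natFloor_div_le_one hx
  have hlen : |1 - (⌊x⌋₊ : ℝ) / x| ≤ 1 / x := by
    rw [abs_of_nonneg (sub_nonneg.2 hN), one_sub_div hx.ne', div_le_div_iff_of_pos_right hx]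
    linarith [Nat.lt_floor_add_one x]
  calc ‖∫ t in (⌊x⌋₊ : ℝ) / x..1, (f t : ℂ) * fourierKernel x t‖
      ≤ supNorm01 f * |1 - (⌊x⌋₊ : ℝ) / x| := by
        refine intervalIntegral.norm_integral_le_of_norm_le_const fun t ht => ?_
        rw [uIoc_of_le hN] at ht
        rw [norm_mul, norm_fourierKernel, mul_one, Complex.norm_real]
        exact norm_le_supNorm01 hbdd ⟨(by positivity : (0 : ℝ) ≤ _).trans ht.1.le, ht.2⟩
    _ ≤ supNorm01 f * (1 / x) :=
        mul_le_mul_of_nonneg_left hlen (supNorm01_nonneg hbdd)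
    _ = supNorm01 f / x := mul_one_div _ _

end FourierIntegral

/-- Effective Riemann–Lebesgue lemma: if `f : [0,1] → ℝ` is bounded with finite
`p`-variation, then `|∫₀¹ f(t) e^{-2πixt} dt| ≤ V_p(f) x^{-1/p} + ‖f‖_∞ / x` for `x > 0`. -/
theorem effective_riemann_lebesgue (p : ℝ) (hp : 1 ≤ p) (f : ℝ → ℝ)
    (hfv : HasFinitePVar p f)
    (hbdd : BddAbove ((fun t => ‖f t‖) '' Icc (0 : ℝ) 1))
    (x : ℝ) (hx : 0 < x) :
    ‖∫ t in (0:ℝ)..1, (f t : ℂ) *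
        Complex.exp (-2 * (Real.pi : ℂ) * Complex.I * (x : ℂ) * (t : ℂ))‖ ≤
      pVar p f * x ^ (-(1 / p)) + supNorm01 f / x := by
  change ‖∫ t in (0 : ℝ)..1, (f t : ℂ) * fourierKernel x t‖ ≤ _
  by_cases hint : IntervalIntegrable (fun t => (f t : ℂ) * fourierKernel x t) volume 0 1
  · rw [intervalIntegral.integral_zero_one_eq_sum_add hint (strictMono_natCast_div hx).monotone
      (by simp) (natFloor_div_le_one hx)]
    calc _ ≤ (∑ k ∈ Finset.range ⌊x⌋₊,
            ‖∫ t in (k : ℝ) / x..((k + 1 : ℕ) : ℝ) / x, (f t : ℂ) * fourierKernel x t‖)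
          + ‖∫ t in (⌊x⌋₊ : ℝ) / x..1, (f t : ℂ) * fourierKernel x t‖ :=
          (norm_add_le _ _).trans (add_le_add_left (norm_sum_le _ _) _)
      _ ≤ _ := add_le_add (sum_norm_integral_periods_le hp hfv hbdd hx hint)
          (norm_integral_remainder_le hbdd hx)
  · rw [intervalIntegral.integral_undef hint, norm_zero]
    have hV := pVar_nonneg hfv
    have hM := supNorm01_nonneg hbdd
    positivity
end
end

section
/- Let G be an arithmetic semigroup with counting function N_G(x) = A x + O(x / log^γ x) for some γ > 1 and constant A. Then the associated zeta function ζ_G(s) = ∑_{g ∈ G} ‖g‖^{-s} satisfies |ζ_G(σ + it)| ≪ 1 + 1/|σ + it − 1| + |t| for all σ > 1. -/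
open Set MeasureTheory Filter

attribute [local instance] Classical.propDecidable

noncomputable section

/-- An arithmetic semigroup: a commutative semigroup with identity (i.e. a commutative
monoid) `G` together with a multiplicative norm `‖·‖ : G → [1,∞)` such that
`N_G(x) = #{g : ‖g‖ ≤ x}` is finite for every `x`, the identity is the unique element
of norm `1`, and factorization into irreducible elements is unique. -/
structure ArithSemigroup (G : Type) [CommMonoid G] where
  Norm : G → ℝ
  one_le_norm : ∀ g, 1 ≤ Norm g
  norm_mul : ∀ a b, Norm (a * b) = Norm a * Norm b
  finite : ∀ x : ℝ, {g : G | Norm g ≤ x}.Finite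
  eq_one_of_norm_eq_one : ∀ g, Norm g = 1 → g = 1
  unique_factorization : ∀ g : G, g ≠ 1 →
    ∃! m : Multiset G, (∀ p ∈ m, Irreducible p) ∧ m.prod = g

variable {G : Type} [CommMonoid G]

namespace ArithSemigroup

/-- The counting function `N_G(x) = #{g ∈ G : ‖g‖ ≤ x}`. -/
def N (A : ArithSemigroup G) (x : ℝ) : ℕ := {g : G | A.Norm g ≤ x}.ncard

/-- The zeta function `ζ_G(s) = ∑_{g ∈ G} ‖g‖^{-s}` (as a tsum, converging for `Re s > 1`). -/
def zeta (A : ArithSemigroup G) (s : ℂ) : ℂ := ∑' g : G, (A.Norm g : ℂ) ^ (-s)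

/-- Boundary values of the zeta function, via `ζ_G(s) = s ∫₁^∞ N_G(x) x^{-s-1} dx`. -/
def zetaB (A : ArithSemigroup G) (s : ℂ) : ℂ :=
  s * ∫ x in Ioi (1 : ℝ), (A.N x : ℂ) * (x : ℂ) ^ (-s - 1)

/-- The von Mangoldt function of `G`: `Λ(g) = log ‖p‖` if `g` is a (positive) power of
an irreducible `p`, and `0` otherwise. -/
def Lambda (A : ArithSemigroup G) (g : G) : ℝ :=
  if h : ∃ p : G, Irreducible p ∧ ∃ k : ℕ, 0 < k ∧ g = p ^ k
  then Real.log (A.Norm h.choose) else 0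

/-- The Chebyshev function `ψ_G(x) = ∑_{‖g‖ ≤ x} Λ_G(g)`. -/
def psi (A : ArithSemigroup G) (x : ℝ) : ℝ := ∑ g ∈ (A.finite x).toFinset, A.Lambda g

/-- `π_G(x)`: the number of irreducible elements of norm at most `x`. -/
def primeCount (A : ArithSemigroup G) (x : ℝ) : ℕ :=
  {g : G | Irreducible g ∧ A.Norm g ≤ x}.ncard

/-- The Möbius function of `G`: `μ(g) = (-1)^k` if `g` is a product of `k` distinct
irreducible elements, and `0` otherwise. -/
def mu (A : ArithSemigroup G) (g : G) : ℤ :=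
  if h : ∃ s : Finset G, (∀ p ∈ s, Irreducible p) ∧ s.prod id = g
  then (-1) ^ h.choose.card else 0

/-- The Mertens function `M_G(x) = ∑_{‖g‖ ≤ x} μ_G(g)`. -/
def M (A : ArithSemigroup G) (x : ℝ) : ℤ := ∑ g ∈ (A.finite x).toFinset, A.mu g

end ArithSemigroup

/-!
Partial summation gives `ζ_G(s) = s ∫₁^∞ N_G(x) x^{-s-1} dx` for `Re s > 1`. Writing
`N_G(x) = a x + R(x)`, this becomes `ζ_G(s) = a s/(s-1) + s ∫₁^∞ R(x) x^{-s-1} dx`, and `γ > 1`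
makes `∫₁^∞ |R(x)| x^{-2} dx` finite, so for `1 < σ ≤ 2` the bound follows from `|s| ≤ 2 + |t|`.
For `σ > 2` the crude bound `N_G(x) ≪ x` already gives `|ζ_G(s)| ≪ |s|/(σ - 1) ≪ 1 + |t|`.
-/

lemma integral_Ici_indicator_cpow {s : ℂ} {c : ℝ} (hs : 0 < s.re) (hc : 1 ≤ c) :
    ∫ x in Ici (1 : ℝ), (Ici c).indicator (fun x : ℝ => (x : ℂ) ^ (-s - 1)) x =
      (c : ℂ) ^ (-s) / s := by
  have hre : (-s - 1).re < -1 := by simp; linarith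
  rw [integral_indicator measurableSet_Ici, Measure.restrict_restrict measurableSet_Ici,
    Ici_inter_Ici, sup_eq_left.2 hc, integral_Ici_eq_integral_Ioi,
    integral_Ioi_cpow_of_lt hre (by linarith), sub_add_cancel, neg_div_neg_eq]

lemma norm_ofReal_cpow_neg_sub_one {x : ℝ} (hx : 0 < x) (s : ℂ) :
    ‖(x : ℂ) ^ (-s - 1)‖ = x ^ (-s.re - 1) := by
  simp [Complex.norm_cpow_eq_rpow_re_of_pos hx]

lemma integrableOn_Ici_rpow_neg {b : ℝ} (hb : 1 < b) :
    IntegrableOn (fun x : ℝ => x ^ (-b)) (Ici 1) := by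
  rw [integrableOn_Ici_iff_integrableOn_Ioi]
  exact integrableOn_Ioi_rpow_of_lt (by linarith) one_pos

lemma integral_Ici_rpow_neg {b : ℝ} (hb : 1 < b) :
    ∫ x in Ici (1 : ℝ), x ^ (-b) = 1 / (b - 1) := by
  rw [integral_Ici_eq_integral_Ioi, integral_Ioi_rpow_of_lt (by linarith) one_pos, Real.one_rpow,
    show -b + 1 = -(b - 1) by ring, neg_div_neg_eq]

lemma integrableOn_Ici_cpow_neg {s : ℂ} (hs : 1 < s.re) :
    IntegrableOn (fun x : ℝ => (x : ℂ) ^ (-s)) (Ici 1) := by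
  rw [integrableOn_Ici_iff_integrableOn_Ioi]
  exact integrableOn_Ioi_cpow_of_lt (by simpa using hs) one_pos

lemma integral_Ici_cpow_neg {s : ℂ} (hs : 1 < s.re) :
    ∫ x in Ici (1 : ℝ), (x : ℂ) ^ (-s) = 1 / (s - 1) := by
  rw [integral_Ici_eq_integral_Ioi, integral_Ioi_cpow_of_lt (by simpa using hs) one_pos,
    Complex.ofReal_one, Complex.one_cpow, show -s + 1 = -(s - 1) by ring, neg_div_neg_eq]

lemma integrableOn_Ioi_rpow_log_div {γ : ℝ} (hγ : 1 < γ) :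
    IntegrableOn (fun x : ℝ => Real.log x ^ (-γ) / x) (Ioi 2) := by
  have hγ' : 1 - γ ≠ 0 := by linarith
  have hderiv : ∀ x ∈ Ioi (2 : ℝ),
      HasDerivAt (fun y => Real.log y ^ (1 - γ) / (1 - γ)) (Real.log x ^ (-γ) / x) x := by
    intro x (hx : 2 < x)
    have hlog : 0 < Real.log x := Real.log_pos (by linarith)
    refine (((Real.hasDerivAt_rpow_const (p := 1 - γ) (Or.inl hlog.ne')).comp x
      (Real.hasDerivAt_log (by linarith))).div_const (1 - γ)).congr_deriv ?_
    rw [show 1 - γ - 1 = -γ by ring]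
    field_simp
  have hcont : ContinuousWithinAt (fun y => Real.log y ^ (1 - γ) / (1 - γ)) (Ici 2) 2 :=
    (((Real.continuousAt_rpow_const _ _ (Or.inl (Real.log_pos one_lt_two).ne')).comp
      (Real.continuousAt_log two_ne_zero)).div_const _).continuousWithinAt
  have hlim : Filter.Tendsto (fun y => Real.log y ^ (1 - γ) / (1 - γ)) Filter.atTop
      (nhds (0 / (1 - γ))) := by
    refine Filter.Tendsto.div_const ?_ _
    simpa [Function.comp_def] using
      (tendsto_rpow_neg_atTop (by linarith : 0 < γ - 1)).comp Real.tendsto_log_atTop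
  refine integrableOn_Ioi_deriv_of_nonneg hcont hderiv (fun x (hx : 2 < x) => ?_) hlim
  exact div_nonneg (Real.rpow_nonneg (Real.log_nonneg (by linarith)) _) (by linarith)

lemma integrableOn_abs_mul_rpow_neg_two {f : ℝ → ℝ} {C γ : ℝ} (hγ : 1 < γ)
    (hmeas : Measurable f) (hf : IntegrableOn f (Icc 1 2))
    (hbound : ∀ x, 2 ≤ x → |f x| ≤ C * (x / Real.log x ^ γ)) :
    IntegrableOn (fun x => |f x| * x ^ (-2 : ℝ)) (Ici 1) := by
  rw [← Icc_union_Ioi_eq_Ici one_le_two]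
  refine IntegrableOn.union ?_ ?_
  · exact IntegrableOn.mul_continuousOn hf.abs
      (fun x hx =>
        (Real.continuousAt_rpow_const _ _ (Or.inl (by linarith [hx.1]))).continuousWithinAt)
      isCompact_Icc
  refine ((integrableOn_Ioi_rpow_log_div hγ).const_mul C).mono'
    (hmeas.abs.mul (measurable_id.pow_const _)).aestronglyMeasurable ?_
  filter_upwards [ae_restrict_mem measurableSet_Ioi] with x (hx : 2 < x)
  have hx0 : 0 < x := by linarith
  have hlog : 0 < Real.log x := Real.log_pos (by linarith)
  rw [Real.norm_of_nonneg (by positivity)]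
  calc |f x| * x ^ (-2 : ℝ) ≤ C * (x / Real.log x ^ γ) * x ^ (-2 : ℝ) := by
        gcongr; exact hbound x hx.le
    _ = C * (Real.log x ^ (-γ) / x) := by
        rw [Real.rpow_neg hlog.le, Real.rpow_neg hx0.le, Real.rpow_two]
        field_simp

lemma norm_integral_mul_cpow_le {f : ℝ → ℝ}
    (hf : IntegrableOn (fun x => |f x| * x ^ (-2 : ℝ)) (Ici 1)) {s : ℂ} (hs : 1 ≤ s.re) :
    ‖∫ x in Ici 1, (f x : ℂ) * (x : ℂ) ^ (-s - 1)‖ ≤ ∫ x in Ici 1, |f x| * x ^ (-2 : ℝ) := by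
  refine norm_integral_le_of_norm_le hf
    ((ae_restrict_iff' measurableSet_Ici).2 (ae_of_all _ fun x (hx : 1 ≤ x) => ?_))
  rw [norm_mul, Complex.norm_real, Real.norm_eq_abs, norm_ofReal_cpow_neg_sub_one (by linarith)]
  gcongr
  linarith

lemma Complex.norm_div_sub_one_le {s : ℂ} (hs : s ≠ 1) : ‖s / (s - 1)‖ ≤ 1 + 1 / ‖s - 1‖ := by
  rw [show s / (s - 1) = 1 + 1 / (s - 1) by field_simp [sub_ne_zero.2 hs]; ring]
  simpa using norm_add_le 1 (1 / (s - 1))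

namespace ArithSemigroup

lemma countable (A : ArithSemigroup G) : Countable G := by
  have hcover : (univ : Set G) ⊆ ⋃ n : ℕ, {g | A.Norm g ≤ n} :=
    fun g _ => mem_iUnion.2 ⟨⌈A.Norm g⌉₊, Nat.le_ceil (A.Norm g)⟩
  exact countable_univ_iff.1 ((countable_iUnion fun n : ℕ => (A.finite n).countable).mono hcover)

variable (A : ArithSemigroup G)

lemma N_mono : Monotone A.N := fun _ _ hxy =>
  ncard_le_ncard (fun _ hg => le_trans hg hxy) (A.finite _)

lemma measurable_N : Measurable fun x => (A.N x : ℝ) := (Nat.mono_cast.comp A.N_mono).measurable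

lemma tsum_indicator_Ici_norm {M : Type*} [AddCommMonoid M] [TopologicalSpace M] (f : ℝ → M)
    (x : ℝ) : ∑' g, (Ici (A.Norm g)).indicator f x = A.N x • f x := by
  have hfin := A.finite x
  rw [tsum_eq_sum (s := hfin.toFinset), Finset.sum_congr rfl (g := fun _ => f x),
    Finset.sum_const, ← ncard_eq_toFinset_card _ hfin, N]
  · exact fun g hg => indicator_of_mem (by simpa using hg) _
  · exact fun g hg => indicator_of_notMem (by simpa using hg) _

variable {A}

lemma norm_N_mul_cpow_le {D : ℝ} (hD : ∀ x, 1 ≤ x → (A.N x : ℝ) ≤ D * x) (s : ℂ) {x : ℝ}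
    (hx : 1 ≤ x) :
    ‖(A.N x : ℂ) * (x : ℂ) ^ (-s - 1)‖ ≤ D * x ^ (-s.re) := by
  have hx0 : 0 < x := one_pos.trans_le hx
  rw [_root_.norm_mul, Complex.norm_natCast, norm_ofReal_cpow_neg_sub_one hx0]
  calc (A.N x : ℝ) * x ^ (-s.re - 1) ≤ D * x * x ^ (-s.re - 1) := by gcongr; exact hD x hx
    _ = D * x ^ (-s.re) := by rw [Real.rpow_sub_one hx0.ne']; field_simp

lemma integrableOn_N_mul_cpow {D : ℝ} (hD : ∀ x, 1 ≤ x → (A.N x : ℝ) ≤ D * x) {s : ℂ}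
    (hs : 1 < s.re) :
    IntegrableOn (fun x => (A.N x : ℂ) * (x : ℂ) ^ (-s - 1)) (Ici 1) := by
  refine ((integrableOn_Ici_rpow_neg hs).const_mul D).mono' ?_ ?_
  · exact ((Complex.measurable_ofReal.comp A.measurable_N).mul
      (Complex.measurable_ofReal.pow_const _)).aestronglyMeasurable
  · filter_upwards [ae_restrict_mem measurableSet_Ici] with x hx
    exact norm_N_mul_cpow_le hD s hx

lemma zeta_eq_mul_integral {D : ℝ} (hD : ∀ x, 1 ≤ x → (A.N x : ℝ) ≤ D * x) {s : ℂ}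
    (hs : 1 < s.re) : A.zeta s = s * ∫ x in Ici 1, (A.N x : ℂ) * (x : ℂ) ^ (-s - 1) := by
  have := A.countable
  have hs0 : s ≠ 0 := by rintro rfl; simp at hs; linarith
  set F : G → ℝ → ℂ := fun g => (Ici (A.Norm g)).indicator fun x => (x : ℂ) ^ (-s - 1)
  have hFmeas (g : G) : AEStronglyMeasurable (F g) (volume.restrict (Ici 1)) :=
    ((Complex.measurable_ofReal.pow_const _).indicator measurableSet_Ici).aestronglyMeasurable
  -- Summing the indicators `F g` over `g` counts `N(x)`, so by Tonelli and `N(x) ≤ D x` the sum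
  -- may be exchanged with the integral.
  have hFsum : ∑' g, ∫⁻ x in Ici 1, ‖F g x‖ₑ ≠ ⊤ := by
    rw [← lintegral_tsum fun g => (hFmeas g).enorm]
    refine ne_top_of_le_ne_top
      ((integrableOn_Ici_rpow_neg hs).const_mul D).lintegral_lt_top.ne
      (setLIntegral_mono' measurableSet_Ici fun x hx => ?_)
    simp_rw [F, enorm_indicator_eq_indicator_enorm]
    rw [A.tsum_indicator_Ici_norm, ← ofReal_norm, ← ENNReal.ofReal_nsmul, nsmul_eq_mul]
    refine ENNReal.ofReal_le_ofReal ?_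
    simpa using norm_N_mul_cpow_le hD s hx
  calc A.zeta s = ∑' g, s * ∫ x in Ici 1, F g x := by
        refine tsum_congr fun g => ?_
        rw [integral_Ici_indicator_cpow (by linarith) (A.one_le_norm g), mul_div_cancel₀ _ hs0]
    _ = s * ∫ x in Ici 1, (A.N x : ℂ) * (x : ℂ) ^ (-s - 1) := by
        rw [tsum_mul_left, ← integral_tsum hFmeas hFsum]
        simp_rw [F, A.tsum_indicator_Ici_norm, nsmul_eq_mul]

lemma norm_zeta_le {D : ℝ} (hD : ∀ x, 1 ≤ x → (A.N x : ℝ) ≤ D * x) {s : ℂ} (hs : 1 < s.re) :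
    ‖A.zeta s‖ ≤ ‖s‖ * (D / (s.re - 1)) := by
  rw [zeta_eq_mul_integral hD hs, _root_.norm_mul]
  gcongr
  calc _ ≤ ∫ x in Ici 1, D * x ^ (-s.re) :=
        norm_integral_le_of_norm_le ((integrableOn_Ici_rpow_neg hs).const_mul D)
          ((ae_restrict_iff' measurableSet_Ici).2
            (ae_of_all _ fun x hx => norm_N_mul_cpow_le hD s hx))
    _ = D / (s.re - 1) := by
        rw [integral_const_mul, integral_Ici_rpow_neg hs, mul_one_div]

lemma zeta_eq_add_integral {D : ℝ} (hD : ∀ x, 1 ≤ x → (A.N x : ℝ) ≤ D * x) (a : ℝ) {s : ℂ}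
    (hs : 1 < s.re) :
    A.zeta s = a * (s / (s - 1)) +
      s * ∫ x in Ici 1, (((A.N x : ℝ) - a * x : ℝ) : ℂ) * (x : ℂ) ^ (-s - 1) := by
  have hs1 : s - 1 ≠ 0 := by intro h; simp [sub_eq_zero.1 h] at hs
  have hsplit : EqOn (fun x : ℝ => (((A.N x : ℝ) - a * x : ℝ) : ℂ) * (x : ℂ) ^ (-s - 1))
      (fun x => (A.N x : ℂ) * (x : ℂ) ^ (-s - 1) - a * (x : ℂ) ^ (-s)) (Ici 1) := by
    intro x (hx : 1 ≤ x)
    have hx0 : (x : ℂ) ≠ 0 := by exact_mod_cast (one_pos.trans_le hx).ne'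
    simp only [Complex.ofReal_sub, Complex.ofReal_mul, Complex.ofReal_natCast]
    rw [Complex.cpow_sub _ _ hx0, Complex.cpow_one]
    field_simp
  rw [setIntegral_congr_fun measurableSet_Ici hsplit,
    integral_sub (integrableOn_N_mul_cpow hD hs)
      ((integrableOn_Ici_cpow_neg hs).const_mul _),
    integral_const_mul, integral_Ici_cpow_neg hs, zeta_eq_mul_integral hD hs]
  field_simp
  ring

lemma integrableOn_Icc_N_sub_mul (a u v : ℝ) :
    IntegrableOn (fun x => (A.N x : ℝ) - a * x) (Icc u v) :=
  (((Nat.mono_cast.comp A.N_mono).monotoneOn _).integrableOn_isCompact isCompact_Icc).sub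
    (continuous_const.mul continuous_id).integrableOn_Icc

lemma exists_N_le_mul {a C γ : ℝ} (hγ : 0 ≤ γ)
    (hN : ∀ x, 2 ≤ x → |(A.N x : ℝ) - a * x| ≤ C * (x / Real.log x ^ γ)) :
    ∃ D, 0 ≤ D ∧ ∀ x, 1 ≤ x → (A.N x : ℝ) ≤ D * x := by
  have hlog2 : 0 < Real.log 2 ^ γ := Real.rpow_pos_of_pos (Real.log_pos one_lt_two) γ
  refine ⟨A.N 2 + |a| + |C| / Real.log 2 ^ γ, by positivity, fun x hx => ?_⟩
  have hx0 : 0 < x := by linarith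
  rcases le_or_gt 2 x with hx2 | hx2
  · have hlog : Real.log 2 ^ γ ≤ Real.log x ^ γ := by gcongr
    have herr : C * (x / Real.log x ^ γ) ≤ |C| / Real.log 2 ^ γ * x :=
      calc C * (x / Real.log x ^ γ) ≤ |C| * (x / Real.log 2 ^ γ) :=
            mul_le_mul (le_abs_self C) (div_le_div_of_nonneg_left hx0.le hlog2 hlog)
              (div_nonneg hx0.le (hlog2.le.trans hlog)) (abs_nonneg C)
          _ = |C| / Real.log 2 ^ γ * x := by ring
    have := (abs_le.1 (hN x hx2)).2
    nlinarith [le_abs_self a, abs_nonneg a, (A.N 2).cast_nonneg (α := ℝ)]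
  · have : (A.N x : ℝ) ≤ A.N 2 := by exact_mod_cast A.N_mono hx2.le
    nlinarith [abs_nonneg a, abs_nonneg C, div_nonneg (abs_nonneg C) hlog2.le]

lemma norm_zeta_le_of_re_le_two {D : ℝ} (hD : ∀ x, 1 ≤ x → (A.N x : ℝ) ≤ D * x) (a : ℝ)
    (hR : IntegrableOn (fun x => |(A.N x : ℝ) - a * x| * x ^ (-2 : ℝ)) (Ici 1)) {s : ℂ}
    (hs : 1 < s.re) (hs2 : s.re ≤ 2) :
    ‖A.zeta s‖ ≤ |a| * (1 + 1 / ‖s - 1‖) +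
      (2 + |s.im|) * ∫ x in Ici 1, |(A.N x : ℝ) - a * x| * x ^ (-2 : ℝ) := by
  have hs_norm : ‖s‖ ≤ 2 + |s.im| := by
    linarith [Complex.norm_le_abs_re_add_abs_im s, abs_of_pos (by linarith : 0 < s.re)]
  rw [zeta_eq_add_integral hD a hs]
  refine (norm_add_le _ _).trans (add_le_add ?_ ?_)
  · rw [_root_.norm_mul, Complex.norm_real, Real.norm_eq_abs]
    exact mul_le_mul_of_nonneg_left
      (Complex.norm_div_sub_one_le fun h => by simp [h] at hs) (abs_nonneg a)
  · rw [_root_.norm_mul]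
    exact mul_le_mul hs_norm (norm_integral_mul_cpow_le hR hs.le) (norm_nonneg _)
      (by positivity)

lemma norm_zeta_le_of_two_lt {D : ℝ} (hD0 : 0 ≤ D) (hD : ∀ x, 1 ≤ x → (A.N x : ℝ) ≤ D * x)
    {s : ℂ} (hs : 2 < s.re) : ‖A.zeta s‖ ≤ (2 + |s.im|) * D := by
  have hs_norm : ‖s‖ ≤ s.re + |s.im| := by
    linarith [Complex.norm_le_abs_re_add_abs_im s, abs_of_pos (by linarith : 0 < s.re)]
  calc ‖A.zeta s‖ ≤ ‖s‖ * (D / (s.re - 1)) := norm_zeta_le hD (by linarith)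
    _ ≤ (s.re + |s.im|) / (s.re - 1) * D := by
      rw [mul_div_assoc', div_mul_eq_mul_div]
      gcongr
      linarith
    _ ≤ (2 + |s.im|) * D := by
      gcongr
      rw [div_le_iff₀ (by linarith)]
      nlinarith [abs_nonneg s.im]

end ArithSemigroup

/-- If `N_G(x) = Ax + O(x/log^γ x)` with `γ > 1`, then
`|ζ_G(σ+it)| ≪ 1 + 1/|σ+it-1| + |t|` for `σ > 1`. -/
theorem zeta_bound (A : ArithSemigroup G) (a γ : ℝ) (hγ : 1 < γ)
    (hN : ∃ C : ℝ, ∀ x : ℝ, 2 ≤ x → |(A.N x : ℝ) - a * x| ≤ C * (x / Real.log x ^ γ)) :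
    ∃ C > (0:ℝ), ∀ σ t : ℝ, 1 < σ →
      ‖A.zeta (σ + t * Complex.I)‖ ≤
        C * (1 + 1 / ‖(σ + t * Complex.I : ℂ) - 1‖ + |t|) := by
  obtain ⟨C, hC⟩ := hN
  obtain ⟨D, hD0, hD⟩ := A.exists_N_le_mul (by linarith) hC
  have hR := integrableOn_abs_mul_rpow_neg_two hγ
    (A.measurable_N.sub (measurable_const.mul measurable_id))
    (A.integrableOn_Icc_N_sub_mul a 1 2) hC
  set K := ∫ x in Ici 1, |(A.N x : ℝ) - a * x| * x ^ (-2 : ℝ)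
  have hK : 0 ≤ K := setIntegral_nonneg measurableSet_Ici fun x (hx : 1 ≤ x) =>
    mul_nonneg (abs_nonneg _) (Real.rpow_nonneg (by linarith) _)
  refine ⟨|a| + 2 * (K + D) + 1, by positivity, fun σ t hσ => ?_⟩
  have him : (σ + t * Complex.I).im = t := by simp
  have hu : 0 ≤ 1 / ‖(σ + t * Complex.I : ℂ) - 1‖ := by positivity
  rcases le_or_gt σ 2 with hσ2 | hσ2
  · have hζ := A.norm_zeta_le_of_re_le_two hD a hR (s := σ + t * Complex.I)
      (by simpa using hσ) (by simpa using hσ2)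
    rw [him] at hζ
    nlinarith [abs_nonneg t, abs_nonneg a]
  · have hζ := A.norm_zeta_le_of_two_lt hD0 hD (s := σ + t * Complex.I) (by simpa using hσ2)
    rw [him] at hζ
    nlinarith [abs_nonneg t, abs_nonneg a]
end
end
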